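/- For every fixed d > 0, lim_{n→∞} sup_{p ∈ P(A), ρ ∈ D} | E_p[R(T,d,ρ)] − R(p,d,ρ) | = 0; i.e., the expected empirical rate-distortion function converges to the rate-distortion function uniformly over all source distributions and all distortion measures in D. -/

import Mathlib

open Filter MeasureTheory
open scoped BigOperators

noncomputable section

variable {A B : Type*}

/-- `p` is a probability distribution on the finite alphabet `A`. -/
def IsProb [Fintype A] (p : A → ℝ) : Prop :=
  (∀ a, 0 ≤ p a) ∧ ∑ a, p a = 1

/-- `Q` is a conditional probability distribution from `A` to `B`. -/
def IsCondProb [Fintype A] [Fintype B] (Q : A → B → ℝ) : Prop :=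
  ∀ j, IsProb (Q j)

/-- `ρ` is a distortion measure in the class `D`: bounded in `[0, ρmax]` and
with `max_j min_k ρ(j,k) = 0` (equivalently, every row contains a zero). -/
def IsDistMeasure [Fintype A] [Fintype B] (ρmax : ℝ) (ρ : A → B → ℝ) : Prop :=
  (∀ j k, 0 ≤ ρ j k ∧ ρ j k ≤ ρmax) ∧ ∀ j, ∃ k, ρ j k = 0

/-- Mutual information `I(p, Q)` in nats. -/
def mutualInfo [Fintype A] [Fintype B] (p : A → ℝ) (Q : A → B → ℝ) : ℝ :=
  ∑ j, ∑ k, p j * Q j k * Real.log (Q j k / ∑ j', p j' * Q j' k)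

/-- Average distortion `Σ_{j,k} p(j) Q(k|j) ρ(j,k)`. -/
def avgDist [Fintype A] [Fintype B] (p : A → ℝ) (Q : A → B → ℝ) (ρ : A → B → ℝ) : ℝ :=
  ∑ j, ∑ k, p j * Q j k * ρ j k

/-- The rate-distortion function `R(p,d,ρ)` in nats. -/
def RD [Fintype A] [Fintype B] (p : A → ℝ) (d : ℝ) (ρ : A → B → ℝ) : ℝ :=
  sInf { r | ∃ Q, IsCondProb Q ∧ avgDist p Q ρ ≤ d ∧ r = mutualInfo p Q }

/-- The type (empirical distribution) of a sequence `x ∈ A^n`. -/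
def typeOf [DecidableEq A] {n : ℕ} (x : Fin n → A) : A → ℝ :=
  fun a => ((Finset.univ.filter fun i => x i = a).card : ℝ) / n

/-- The i.i.d. product probability `p^n(x) = ∏ i p(x_i)`. -/
def prodProb {n : ℕ} (p : A → ℝ) (x : Fin n → A) : ℝ :=
  ∏ i, p (x i)

/-- The `n`-fold single-letter distortion `ρ_n(x,y) = (1/n) Σ_i ρ(x_i, y_i)`. -/
def nDist {n : ℕ} (ρ : A → B → ℝ) (x : Fin n → A) (y : Fin n → B) : ℝ :=
  (∑ i, ρ (x i) (y i)) / n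

/-- `E_p[R(T,d,ρ)]`, the expectation of the empirical rate-distortion function
over `X^n` i.i.d. `p` (written as a sum over sequences). -/
def expTypeRD [Fintype A] [DecidableEq A] [Fintype B] (n : ℕ) (p : A → ℝ)
    (d : ℝ) (ρ : A → B → ℝ) : ℝ :=
  ∑ x : Fin n → A, prodProb p x * RD (typeOf x) d ρ

set_option maxHeartbeats 1000000

/-- master log-sum inequality -/
private lemma logSum {ι : Type*} (s : Finset ι) (a b : ι → ℝ)
    (ha : ∀ i ∈ s, 0 ≤ a i) (hb : ∀ i ∈ s, 0 ≤ b i)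
    (hab : ∀ i ∈ s, 0 < a i → 0 < b i) (hB : 0 < ∑ i ∈ s, b i) :
    (∑ i ∈ s, a i) * Real.log ((∑ i ∈ s, a i) / (∑ i ∈ s, b i)) ≤
      ∑ i ∈ s, a i * Real.log (a i / b i) := by
  have hS0 : 0 ≤ ∑ i ∈ s, a i := Finset.sum_nonneg ha
  set S := ∑ i ∈ s, a i with hSdef
  set T := ∑ i ∈ s, b i with hTdef
  have key : ∀ i ∈ s, a i - b i * (S / T) ≤
      a i * Real.log (a i / b i) - a i * Real.log (S / T) := by
    intro i hi
    rcases (ha i hi).eq_or_lt with h | hpos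
    · have h1 : 0 ≤ b i * (S / T) := mul_nonneg (hb i hi) (div_nonneg hS0 hB.le)
      rw [← h]
      simp only [zero_mul, zero_sub, sub_zero]
      linarith
    · have hbpos := hab i hi hpos
      have hSpos : 0 < S := lt_of_lt_of_le hpos (Finset.single_le_sum ha hi)
      have hlog : Real.log (b i * S / (a i * T)) ≤ b i * S / (a i * T) - 1 :=
        Real.log_le_sub_one_of_pos (by positivity)
      have heq : Real.log (b i * S / (a i * T)) =
          Real.log (S / T) - Real.log (a i / b i) := by
        rw [Real.log_div (by positivity : (0:ℝ) < b i * S).ne'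
              (by positivity : (0:ℝ) < a i * T).ne',
            Real.log_mul hbpos.ne' hSpos.ne', Real.log_mul hpos.ne' hB.ne',
            Real.log_div hSpos.ne' hB.ne', Real.log_div hpos.ne' hbpos.ne']
        ring
      have h3 := mul_le_mul_of_nonneg_left (heq ▸ hlog) hpos.le
      have h4 : a i * (b i * S / (a i * T) - 1) = b i * (S / T) - a i := by
        field_simp
      rw [h4, mul_sub] at h3
      linarith
  have hsum := Finset.sum_le_sum key
  have e1 : ∑ i ∈ s, (a i - b i * (S / T)) = 0 := by
    rw [Finset.sum_sub_distrib, ← Finset.sum_mul, ← hSdef, ← hTdef]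
    field_simp
    ring
  have e2 : ∑ i ∈ s, (a i * Real.log (a i / b i) - a i * Real.log (S / T)) =
      (∑ i ∈ s, a i * Real.log (a i / b i)) - S * Real.log (S / T) := by
    rw [Finset.sum_sub_distrib, ← Finset.sum_mul]
  rw [e1, e2] at hsum
  linarith

private lemma logSum_two (a₁ a₂ b₁ b₂ : ℝ) (ha₁ : 0 ≤ a₁) (ha₂ : 0 ≤ a₂)
    (hb₁ : 0 ≤ b₁) (hb₂ : 0 ≤ b₂) (h₁ : 0 < a₁ → 0 < b₁) (h₂ : 0 < a₂ → 0 < b₂)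
    (hb : 0 < b₁ + b₂) :
    (a₁ + a₂) * Real.log ((a₁ + a₂) / (b₁ + b₂)) ≤
      a₁ * Real.log (a₁ / b₁) + a₂ * Real.log (a₂ / b₂) := by
  have h := logSum (Finset.univ : Finset (Fin 2)) (![a₁, a₂]) (![b₁, b₂])
    (by intro i _; fin_cases i <;> simpa)
    (by intro i _; fin_cases i <;> simpa)
    (by intro i _
        fin_cases i
        · simpa using h₁
        · simpa using h₂)
    (by rw [Fin.sum_univ_two]; simpa using hb)
  simpa [Fin.sum_univ_two] using h

private lemma marginal_sum [Fintype A] [Fintype B] {p : A → ℝ} {Q : A → B → ℝ}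
    (hp : IsProb p) (hQ : IsCondProb Q) : ∑ k, ∑ j, p j * Q j k = 1 := by
  rw [Finset.sum_comm]
  calc ∑ j, ∑ k, p j * Q j k = ∑ j, p j := by
        refine Finset.sum_congr rfl fun j _ => ?_
        rw [← Finset.mul_sum, (hQ j).2, mul_one]
    _ = 1 := hp.2

private lemma mutualInfo_nonneg [Fintype A] [Fintype B] {p : A → ℝ} {Q : A → B → ℝ}
    (hp : IsProb p) (hQ : IsCondProb Q) : 0 ≤ mutualInfo p Q := by
  classical
  have hsa : ∑ jk : A × B, p jk.1 * Q jk.1 jk.2 = 1 := by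
    rw [Fintype.sum_prod_type]
    calc ∑ j, ∑ k, p j * Q j k = ∑ j, p j := by
          refine Finset.sum_congr rfl fun j _ => ?_
          rw [← Finset.mul_sum, (hQ j).2, mul_one]
      _ = 1 := hp.2
  have hsb : ∑ jk : A × B, p jk.1 * ∑ j', p j' * Q j' jk.2 = 1 := by
    rw [Fintype.sum_prod_type]
    have hm1 : ∑ k, ∑ j', p j' * Q j' k = 1 := marginal_sum hp hQ
    calc ∑ j, ∑ k : B, p j * ∑ j', p j' * Q j' k = ∑ j, p j * 1 := by
          refine Finset.sum_congr rfl fun j _ => ?_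
          rw [← Finset.mul_sum, hm1]
      _ = 1 := by simp [hp.2]
  have hmain := logSum (Finset.univ : Finset (A × B))
      (fun jk => p jk.1 * Q jk.1 jk.2)
      (fun jk => p jk.1 * ∑ j', p j' * Q j' jk.2)
      (fun jk _ => mul_nonneg (hp.1 _) ((hQ _).1 _))
      (fun jk _ => mul_nonneg (hp.1 _)
        (Finset.sum_nonneg fun j _ => mul_nonneg (hp.1 _) ((hQ _).1 _)))
      (fun jk _ hpos => by
        have h1 : 0 < p jk.1 := by
          rcases (hp.1 jk.1).eq_or_lt with h | h
          · rw [← h, zero_mul] at hpos; exact absurd hpos (lt_irrefl 0)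
          · exact h
        have h2 : 0 < ∑ j', p j' * Q j' jk.2 :=
          lt_of_lt_of_le hpos (Finset.single_le_sum
            (fun j _ => mul_nonneg (hp.1 j) ((hQ j).1 _)) (Finset.mem_univ jk.1))
        exact mul_pos h1 h2)
      (by rw [hsb]; norm_num)
  rw [hsa, hsb] at hmain
  have heq : ∑ jk : A × B, (p jk.1 * Q jk.1 jk.2) *
      Real.log ((p jk.1 * Q jk.1 jk.2) / (p jk.1 * ∑ j', p j' * Q j' jk.2)) =
      mutualInfo p Q := by
    rw [Fintype.sum_prod_type]
    unfold mutualInfo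
    refine Finset.sum_congr rfl fun j _ => Finset.sum_congr rfl fun k _ => ?_
    rcases (hp.1 j).eq_or_lt with h | h
    · rw [← h]; simp
    · rw [mul_div_mul_left _ _ h.ne']
  rw [heq] at hmain
  simpa using hmain

private lemma mutualInfo_le_ref [Fintype A] [Fintype B] {p : A → ℝ} {Q : A → B → ℝ}
    (r : B → ℝ) (hp : IsProb p) (hQ : IsCondProb Q) (hr : ∀ k, 0 < r k)
    (hr1 : ∑ k, r k = 1) :
    mutualInfo p Q ≤ ∑ j, ∑ k, p j * Q j k * Real.log (Q j k / r k) := by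
  classical
  have hpt : ∀ j k, p j * Q j k * Real.log (Q j k / r k)
      - p j * Q j k * Real.log (Q j k / (∑ j', p j' * Q j' k))
      = p j * Q j k * Real.log ((∑ j', p j' * Q j' k) / r k) := by
    intro j k
    rcases (mul_nonneg (hp.1 j) ((hQ j).1 k)).eq_or_lt with h | h
    · rw [← h]; ring
    · have hQpos : 0 < Q j k := by
        rcases ((hQ j).1 k).eq_or_lt with h' | h'
        · rw [← h', mul_zero] at h; exact absurd h (lt_irrefl 0)
        · exact h'
      have hmpos : 0 < ∑ j', p j' * Q j' k :=
        lt_of_lt_of_le h (Finset.single_le_sum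
          (fun j' _ => mul_nonneg (hp.1 j') ((hQ j').1 k)) (Finset.mem_univ j))
      rw [Real.log_div hQpos.ne' (hr k).ne', Real.log_div hQpos.ne' hmpos.ne',
          Real.log_div hmpos.ne' (hr k).ne']
      ring
  have hkey : (∑ j, ∑ k, p j * Q j k * Real.log (Q j k / r k)) - mutualInfo p Q
      = ∑ k, (∑ j, p j * Q j k) * Real.log ((∑ j', p j' * Q j' k) / r k) := by
    unfold mutualInfo
    rw [← Finset.sum_sub_distrib]
    calc ∑ j, ((∑ k, p j * Q j k * Real.log (Q j k / r k))
            - ∑ k, p j * Q j k * Real.log (Q j k / ∑ j', p j' * Q j' k))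
        = ∑ j, ∑ k, p j * Q j k * Real.log ((∑ j', p j' * Q j' k) / r k) := by
          refine Finset.sum_congr rfl fun j _ => ?_
          rw [← Finset.sum_sub_distrib]
          exact Finset.sum_congr rfl fun k _ => hpt j k
      _ = ∑ k, ∑ j, p j * Q j k * Real.log ((∑ j', p j' * Q j' k) / r k) :=
          Finset.sum_comm
      _ = ∑ k, (∑ j, p j * Q j k) * Real.log ((∑ j', p j' * Q j' k) / r k) := by
          refine Finset.sum_congr rfl fun k _ => ?_
          rw [Finset.sum_mul]
  have hlog := logSum (Finset.univ : Finset B) (fun k => ∑ j, p j * Q j k) r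
      (fun k _ => Finset.sum_nonneg fun j _ => mul_nonneg (hp.1 j) ((hQ j).1 k))
      (fun k _ => (hr k).le)
      (fun k _ _ => hr k)
      (by rw [hr1]; norm_num)
  rw [marginal_sum hp hQ, hr1] at hlog
  simp only [ne_eq, div_one, Real.log_one, mul_zero] at hlog
  linarith [hkey, hlog]

private lemma detKernel_cond [Fintype A] [Fintype B] (k0 : A → B) [DecidableEq B] :
    IsCondProb (fun j k => (if k = k0 j then (1:ℝ) else 0)) := by
  intro j
  constructor
  · intro k; dsimp only; split <;> norm_num
  · simp

private lemma avgDist_zero_kernel [Fintype A] [Fintype B] [DecidableEq B] {ρ : A → B → ℝ}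
    (q : A → ℝ) (k0 : A → B) (hk0 : ∀ j, ρ j (k0 j) = 0) :
    avgDist q (fun j k => if k = k0 j then 1 else 0) ρ = 0 := by
  unfold avgDist
  refine Finset.sum_eq_zero fun j _ => Finset.sum_eq_zero fun k _ => ?_
  by_cases h : k = k0 j
  · rw [h, hk0 j]; ring
  · dsimp only; rw [if_neg h]; ring

private lemma RD_continuity [Fintype A] [Fintype B] [Nonempty A]
    {ρmax : ℝ} (hρmax : 0 < ρmax) {d : ℝ} (hd : 0 < d)
    {η : ℝ} (hη0 : 0 < η) (hη1 : η < 1)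
    (p t : A → ℝ) (ρ : A → B → ℝ) (hp : IsProb p) (ht : IsProb t)
    (hρ : IsDistMeasure ρmax ρ) :
    RD t d ρ ≤ RD p d ρ + (Real.log (1 / (1 - η))
      + (∑ j, |t j - p j|) * Real.log ((Fintype.card B : ℝ) / η)
      + ρmax * (∑ j, |t j - p j|) / d * Real.log (Fintype.card B)) := by
  classical
  choose k0 hk0 using hρ.2
  have hBne : Nonempty B := ⟨k0 (Classical.arbitrary A)⟩
  set Kc : ℝ := (Fintype.card B : ℝ) with hKcdef
  have hKc1 : (1:ℝ) ≤ Kc := by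
    rw [hKcdef]; exact_mod_cast Fintype.card_pos
  have hKc0 : 0 < Kc := lt_of_lt_of_le one_pos hKc1
  set δ := ∑ j, |t j - p j| with hδdef
  have hδ0 : 0 ≤ δ := Finset.sum_nonneg fun _ _ => abs_nonneg _
  have hden : 0 < d + ρmax * δ := by
    have : 0 ≤ ρmax * δ := mul_nonneg hρmax.le hδ0
    linarith
  set lam := ρmax * δ / (d + ρmax * δ) with hlamdef
  have hlam0 : 0 ≤ lam := div_nonneg (mul_nonneg hρmax.le hδ0) hden.le
  have hlam1 : lam < 1 := (div_lt_one hden).mpr (by linarith)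
  have h1lam : 0 < 1 - lam := by linarith
  have h1η : 0 < 1 - η := by linarith
  set Q0 : A → B → ℝ := fun j k => if k = k0 j then 1 else 0 with hQ0def
  have hQ0c : IsCondProb Q0 := detKernel_cond k0
  set C := Real.log (1/(1-η)) + δ * Real.log (Kc/η) + ρmax * δ / d * Real.log Kc with hCdef
  have hc0 : 0 ≤ Real.log (1/(1-η)) :=
    Real.log_nonneg (by rw [le_div_iff₀ h1η]; linarith)
  have hlogKη : 0 ≤ Real.log (Kc/η) := Real.log_nonneg ((le_div_iff₀ hη0).mpr (by linarith))
  have hlogK : 0 ≤ Real.log Kc := Real.log_nonneg hKc1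
  have main : ∀ Q : A → B → ℝ, IsCondProb Q → avgDist p Q ρ ≤ d →
      RD t d ρ ≤ mutualInfo p Q + C := by
    intro Q hQc hQd
    set m : B → ℝ := fun k => ∑ j', p j' * Q j' k with hmdef
    have hm0 : ∀ k, 0 ≤ m k := fun k =>
      Finset.sum_nonneg fun j _ => mul_nonneg (hp.1 j) ((hQc j).1 k)
    have hmsum : ∑ k, m k = 1 := marginal_sum hp hQc
    set r' : B → ℝ := fun k => (1 - η) * m k + η / Kc with hr'def
    have hr'pos : ∀ k, 0 < r' k := fun k =>
      add_pos_of_nonneg_of_pos (mul_nonneg h1η.le (hm0 k)) (div_pos hη0 hKc0)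
    have hr'sum : ∑ k, r' k = 1 := by
      rw [hr'def]
      rw [Finset.sum_add_distrib, ← Finset.mul_sum, hmsum, mul_one, Finset.sum_const,
          Finset.card_univ, nsmul_eq_mul]
      rw [← hKcdef]
      field_simp
      ring
    set rs : B → ℝ := fun k => (1 - lam) * r' k + lam / Kc with hrsdef
    have hrspos : ∀ k, 0 < rs k := fun k =>
      add_pos_of_pos_of_nonneg (mul_pos h1lam (hr'pos k)) (div_nonneg hlam0 hKc0.le)
    have hrssum : ∑ k, rs k = 1 := by
      rw [hrsdef]
      rw [Finset.sum_add_distrib, ← Finset.mul_sum, hr'sum, mul_one, Finset.sum_const,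
          Finset.card_univ, nsmul_eq_mul]
      rw [← hKcdef]
      field_simp
      ring
    set Ql : A → B → ℝ := fun j k => (1 - lam) * Q j k + lam * Q0 j k with hQldef
    have hQlc : IsCondProb Ql := by
      intro j
      constructor
      · intro k
        exact add_nonneg (mul_nonneg h1lam.le ((hQc j).1 k)) (mul_nonneg hlam0 ((hQ0c j).1 k))
      · rw [hQldef]
        rw [Finset.sum_add_distrib, ← Finset.mul_sum, ← Finset.mul_sum, (hQc j).2, (hQ0c j).2]
        ring
    -- feasibility
    have havgQ0 : avgDist t Q0 ρ = 0 := avgDist_zero_kernel t k0 hk0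
    have havglin : avgDist t Ql ρ = (1-lam) * avgDist t Q ρ + lam * avgDist t Q0 ρ := by
      unfold avgDist
      rw [Finset.mul_sum, Finset.mul_sum, ← Finset.sum_add_distrib]
      refine Finset.sum_congr rfl fun j _ => ?_
      rw [Finset.mul_sum, Finset.mul_sum, ← Finset.sum_add_distrib]
      refine Finset.sum_congr rfl fun k _ => ?_
      show t j * ((1-lam) * Q j k + lam * Q0 j k) * ρ j k = _
      ring
    have hrowbound : ∀ j, 0 ≤ ∑ k, Q j k * ρ j k ∧ ∑ k, Q j k * ρ j k ≤ ρmax := by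
      intro j
      constructor
      · exact Finset.sum_nonneg fun k _ => mul_nonneg ((hQc j).1 k) (hρ.1 j k).1
      · calc ∑ k, Q j k * ρ j k ≤ ∑ k, Q j k * ρmax :=
            Finset.sum_le_sum fun k _ => mul_le_mul_of_nonneg_left (hρ.1 j k).2 ((hQc j).1 k)
          _ = ρmax := by rw [← Finset.sum_mul, (hQc j).2, one_mul]
    have havgt : avgDist t Q ρ ≤ d + ρmax * δ := by
      have h1 : avgDist t Q ρ - avgDist p Q ρ = ∑ j, (t j - p j) * ∑ k, Q j k * ρ j k := by
        unfold avgDist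
        rw [← Finset.sum_sub_distrib]
        refine Finset.sum_congr rfl fun j _ => ?_
        rw [Finset.mul_sum, ← Finset.sum_sub_distrib]
        exact Finset.sum_congr rfl fun k _ => by ring
      have h2 : ∑ j, (t j - p j) * ∑ k, Q j k * ρ j k ≤ ∑ j, |t j - p j| * ρmax := by
        refine Finset.sum_le_sum fun j _ => ?_
        calc (t j - p j) * ∑ k, Q j k * ρ j k ≤ |t j - p j| * ∑ k, Q j k * ρ j k :=
              mul_le_mul_of_nonneg_right (le_abs_self _) (hrowbound j).1
          _ ≤ |t j - p j| * ρmax := mul_le_mul_of_nonneg_left (hrowbound j).2 (abs_nonneg _)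
      have h3 : ∑ j, |t j - p j| * ρmax = ρmax * δ := by
        rw [← Finset.sum_mul, ← hδdef, mul_comm]
      linarith
    have hfeas : avgDist t Ql ρ ≤ d := by
      rw [havglin, havgQ0, mul_zero, add_zero]
      have h4 : (1 - lam) * avgDist t Q ρ ≤ (1 - lam) * (d + ρmax * δ) :=
        mul_le_mul_of_nonneg_left havgt h1lam.le
      have h5 : (1 - lam) * (d + ρmax * δ) = d := by
        rw [hlamdef]; field_simp; ring
      linarith
    have hbdd : BddBelow {r | ∃ Q, IsCondProb Q ∧ avgDist t Q ρ ≤ d ∧ r = mutualInfo t Q} := by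
      refine ⟨0, ?_⟩
      rintro r ⟨Q', h1, _, rfl⟩
      exact mutualInfo_nonneg ht h1
    have hRDle : RD t d ρ ≤ mutualInfo t Ql :=
      csInf_le hbdd ⟨Ql, hQlc, hfeas, rfl⟩
    have hA : mutualInfo t Ql ≤ ∑ j, ∑ k, t j * Ql j k * Real.log (Ql j k / rs k) :=
      mutualInfo_le_ref rs ht hQlc hrspos hrssum
    have hsplit : ∀ j k, Ql j k * Real.log (Ql j k / rs k) ≤
        (1 - lam) * (Q j k * Real.log (Q j k / r' k))
          + lam * (Q0 j k * Real.log (Q0 j k * Kc)) := by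
      intro j k
      have h2 := logSum_two ((1-lam) * Q j k) (lam * Q0 j k) ((1-lam) * r' k) (lam / Kc)
        (mul_nonneg h1lam.le ((hQc j).1 k)) (mul_nonneg hlam0 ((hQ0c j).1 k))
        (mul_nonneg h1lam.le (hr'pos k).le) (div_nonneg hlam0 hKc0.le)
        (fun _ => mul_pos h1lam (hr'pos k))
        (fun h => by
          have hlp : 0 < lam := by
            rcases hlam0.eq_or_lt with h' | h'
            · rw [← h', zero_mul] at h; exact absurd h (lt_irrefl 0)
            · exact h'
          exact div_pos hlp hKc0)
        (add_pos_of_pos_of_nonneg (mul_pos h1lam (hr'pos k)) (div_nonneg hlam0 hKc0.le))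
      have e1 : (1-lam) * Q j k * Real.log ((1-lam) * Q j k / ((1-lam) * r' k)) =
          (1-lam) * (Q j k * Real.log (Q j k / r' k)) := by
        rw [mul_div_mul_left _ _ (ne_of_gt h1lam), mul_assoc]
      have e2 : lam * Q0 j k * Real.log (lam * Q0 j k / (lam / Kc)) =
          lam * (Q0 j k * Real.log (Q0 j k * Kc)) := by
        rcases hlam0.eq_or_lt with h' | h'
        · rw [← h', zero_mul, zero_mul, zero_mul]
        · have he : lam * Q0 j k / (lam / Kc) = Q0 j k * Kc := by
            field_simp
          rw [he, mul_assoc]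
      calc Ql j k * Real.log (Ql j k / rs k)
          = ((1-lam) * Q j k + lam * Q0 j k) *
            Real.log (((1-lam) * Q j k + lam * Q0 j k) / ((1-lam) * r' k + lam / Kc)) := rfl
        _ ≤ _ := by rw [← e1, ← e2]; exact h2
    have hsplit' : ∀ j k, t j * Ql j k * Real.log (Ql j k / rs k) ≤
        t j * ((1 - lam) * (Q j k * Real.log (Q j k / r' k))
          + lam * (Q0 j k * Real.log (Q0 j k * Kc))) := by
      intro j k
      rw [mul_assoc]
      exact mul_le_mul_of_nonneg_left (hsplit j k) (ht.1 j)
    have hQ0row : ∀ j, ∑ k, Q0 j k * Real.log (Q0 j k * Kc) = Real.log Kc := by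
      intro j
      rw [Finset.sum_eq_single (k0 j)]
      · show (if k0 j = k0 j then (1:ℝ) else 0) *
            Real.log ((if k0 j = k0 j then (1:ℝ) else 0) * Kc) = _
        rw [if_pos rfl, one_mul, one_mul]
      · intro k _ hk
        show (if k = k0 j then (1:ℝ) else 0) * _ = 0
        rw [if_neg hk, zero_mul]
      · intro h; exact absurd (Finset.mem_univ _) h
    set D : A → ℝ := fun j => ∑ k, Q j k * Real.log (Q j k / r' k) with hDdef
    have hD0 : ∀ j, 0 ≤ D j := by
      intro j
      have h := logSum (Finset.univ : Finset B) (fun k => Q j k) r'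
        (fun k _ => (hQc j).1 k) (fun k _ => (hr'pos k).le) (fun k _ _ => hr'pos k)
        (by rw [hr'sum]; norm_num)
      rw [(hQc j).2, hr'sum] at h
      simpa using h
    have hQle1 : ∀ j k, Q j k ≤ 1 := fun j k =>
      (hQc j).2 ▸ Finset.single_le_sum (fun k' _ => (hQc j).1 k') (Finset.mem_univ k)
    have hDle : ∀ j, D j ≤ Real.log (Kc / η) := by
      intro j
      calc D j ≤ ∑ k, Q j k * Real.log (Kc / η) := by
            refine Finset.sum_le_sum fun k _ => ?_
            rcases ((hQc j).1 k).eq_or_lt with h | h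
            · rw [← h]; simp
            · refine mul_le_mul_of_nonneg_left ?_ h.le
              have h1 : η / Kc ≤ r' k := le_add_of_nonneg_left (mul_nonneg h1η.le (hm0 k))
              have harg : Q j k / r' k ≤ Kc / η := by
                calc Q j k / r' k ≤ 1 / (η / Kc) := by
                      apply div_le_div₀ (by norm_num) (hQle1 j k) (div_pos hη0 hKc0) h1
                  _ = Kc / η := one_div_div η Kc
              exact Real.log_le_log (div_pos h (hr'pos k)) harg
        _ = Real.log (Kc / η) := by rw [← Finset.sum_mul, (hQc j).2, one_mul]
    have hchain1 : mutualInfo t Ql ≤ (1-lam) * (∑ j, t j * D j) + lam * Real.log Kc := by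
      refine hA.trans ?_
      have e : ∀ j, (∑ k, t j * ((1-lam) * (Q j k * Real.log (Q j k / r' k))
          + lam * (Q0 j k * Real.log (Q0 j k * Kc))))
          = (1-lam) * (t j * D j) + t j * lam * Real.log Kc := by
        intro j
        rw [← Finset.mul_sum, Finset.sum_add_distrib, ← Finset.mul_sum, ← Finset.mul_sum,
            hQ0row j]
        show t j * ((1-lam) * D j + lam * Real.log Kc) = _
        ring
      calc ∑ j, ∑ k, t j * Ql j k * Real.log (Ql j k / rs k)
          ≤ ∑ j, ∑ k, t j * ((1-lam) * (Q j k * Real.log (Q j k / r' k))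
              + lam * (Q0 j k * Real.log (Q0 j k * Kc))) :=
            Finset.sum_le_sum fun j _ => Finset.sum_le_sum fun k _ => hsplit' j k
        _ = ∑ j, ((1-lam) * (t j * D j) + t j * lam * Real.log Kc) :=
            Finset.sum_congr rfl fun j _ => e j
        _ = (1-lam) * (∑ j, t j * D j) + lam * Real.log Kc := by
            rw [Finset.sum_add_distrib, ← Finset.mul_sum]
            congr 1
            have : ∀ j, t j * lam * Real.log Kc = t j * (lam * Real.log Kc) := fun j => by ring
            rw [Finset.sum_congr rfl fun j _ => this j, ← Finset.sum_mul, ht.2, one_mul]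
    have hsum_tD : ∑ j, t j * D j ≤ mutualInfo p Q + Real.log (1/(1-η)) + δ * Real.log (Kc/η) := by
      have h1 : ∑ j, t j * D j ≤ (∑ j, p j * D j) + δ * Real.log (Kc/η) := by
        have hj : ∀ j ∈ Finset.univ, t j * D j ≤ p j * D j + |t j - p j| * Real.log (Kc/η) := by
          intro j _
          have a0 : (t j - p j) * D j = t j * D j - p j * D j := by ring
          have a1 : (t j - p j) * D j ≤ |t j - p j| * D j :=
            mul_le_mul_of_nonneg_right (le_abs_self _) (hD0 j)
          have a2 : |t j - p j| * D j ≤ |t j - p j| * Real.log (Kc/η) :=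
            mul_le_mul_of_nonneg_left (hDle j) (abs_nonneg _)
          linarith
        calc ∑ j, t j * D j ≤ ∑ j, (p j * D j + |t j - p j| * Real.log (Kc/η)) :=
              Finset.sum_le_sum hj
          _ = (∑ j, p j * D j) + δ * Real.log (Kc/η) := by
              rw [Finset.sum_add_distrib, ← Finset.sum_mul, ← hδdef]
      have h2 : ∑ j, p j * D j ≤ mutualInfo p Q + Real.log (1/(1-η)) := by
        have hpt : ∀ j k, p j * (Q j k * Real.log (Q j k / r' k)) ≤
            p j * Q j k * Real.log (Q j k / m k) + p j * Q j k * Real.log (1/(1-η)) := by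
          intro j k
          by_cases hp0 : p j = 0
          · simp [hp0]
          by_cases hq0 : Q j k = 0
          · simp [hq0]
          have hppos : 0 < p j := lt_of_le_of_ne (hp.1 j) (Ne.symm hp0)
          have hqpos : 0 < Q j k := lt_of_le_of_ne ((hQc j).1 k) (Ne.symm hq0)
          have hmpos : 0 < m k := lt_of_lt_of_le (mul_pos hppos hqpos)
            (Finset.single_le_sum (fun j' _ => mul_nonneg (hp.1 j') ((hQc j').1 k))
              (Finset.mem_univ j))
          have hr'ge : (1-η) * m k ≤ r' k := le_add_of_nonneg_right (div_nonneg hη0.le hKc0.le)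
          have harg : Q j k / r' k ≤ Q j k / ((1-η) * m k) :=
            div_le_div_of_nonneg_left hqpos.le (mul_pos h1η hmpos) hr'ge
          have hlog2 : Real.log (Q j k / r' k) ≤ Real.log (Q j k / m k) + Real.log (1/(1-η)) := by
            calc Real.log (Q j k / r' k) ≤ Real.log (Q j k / ((1-η) * m k)) :=
                  Real.log_le_log (div_pos hqpos (hr'pos k)) harg
              _ = Real.log (Q j k / m k) + Real.log (1/(1-η)) := by
                  rw [show Q j k / ((1-η) * m k) = (Q j k / m k) * (1/(1-η)) by
                        rw [div_mul_div_comm, mul_one, mul_comm (m k) (1-η)]]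
                  rw [Real.log_mul (div_pos hqpos hmpos).ne' (by positivity)]
          calc p j * (Q j k * Real.log (Q j k / r' k))
              ≤ p j * (Q j k * (Real.log (Q j k / m k) + Real.log (1/(1-η)))) :=
                mul_le_mul_of_nonneg_left
                  (mul_le_mul_of_nonneg_left hlog2 hqpos.le) hppos.le
            _ = p j * Q j k * Real.log (Q j k / m k) + p j * Q j k * Real.log (1/(1-η)) := by
                ring
        have hIm : ∑ j, ∑ k, p j * Q j k * Real.log (Q j k / m k) = mutualInfo p Q := rfl
        have hconst : ∑ j, ∑ k, p j * Q j k * Real.log (1/(1-η)) = Real.log (1/(1-η)) := by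
          calc ∑ j, ∑ k, p j * Q j k * Real.log (1/(1-η))
              = ∑ j, p j * Real.log (1/(1-η)) := by
                refine Finset.sum_congr rfl fun j _ => ?_
                rw [← Finset.sum_mul, ← Finset.mul_sum, (hQc j).2, mul_one]
            _ = Real.log (1/(1-η)) := by rw [← Finset.sum_mul, hp.2, one_mul]
        calc ∑ j, p j * D j = ∑ j, ∑ k, p j * (Q j k * Real.log (Q j k / r' k)) := by
              refine Finset.sum_congr rfl fun j _ => ?_
              rw [Finset.mul_sum]
          _ ≤ ∑ j, ∑ k, (p j * Q j k * Real.log (Q j k / m k)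
                + p j * Q j k * Real.log (1/(1-η))) :=
              Finset.sum_le_sum fun j _ => Finset.sum_le_sum fun k _ => hpt j k
          _ = mutualInfo p Q + Real.log (1/(1-η)) := by
              rw [show (∑ j, ∑ k, (p j * Q j k * Real.log (Q j k / m k)
                  + p j * Q j k * Real.log (1/(1-η))))
                  = (∑ j, ∑ k, p j * Q j k * Real.log (Q j k / m k))
                    + ∑ j, ∑ k, p j * Q j k * Real.log (1/(1-η)) by
                rw [← Finset.sum_add_distrib]
                exact Finset.sum_congr rfl fun j _ => Finset.sum_add_distrib]
              rw [hIm, hconst]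
      linarith
    -- final combination
    have hI0 : 0 ≤ mutualInfo p Q := mutualInfo_nonneg hp hQc
    have hXnn : 0 ≤ mutualInfo p Q + Real.log (1/(1-η)) + δ * Real.log (Kc/η) := by
      have := mul_nonneg hδ0 hlogKη
      linarith
    have hlamle : lam ≤ ρmax * δ / d := by
      rw [hlamdef]
      apply div_le_div_of_nonneg_left (mul_nonneg hρmax.le hδ0) hd
      nlinarith [mul_nonneg hρmax.le hδ0]
    have hstep : (1-lam) * (∑ j, t j * D j) + lam * Real.log Kc ≤
        mutualInfo p Q + Real.log (1/(1-η)) + δ * Real.log (Kc/η) + ρmax * δ / d * Real.log Kc := by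
      have b1 : (1-lam) * (∑ j, t j * D j) ≤
          (1-lam) * (mutualInfo p Q + Real.log (1/(1-η)) + δ * Real.log (Kc/η)) :=
        mul_le_mul_of_nonneg_left hsum_tD h1lam.le
      have b2 : (1-lam) * (mutualInfo p Q + Real.log (1/(1-η)) + δ * Real.log (Kc/η)) ≤
          mutualInfo p Q + Real.log (1/(1-η)) + δ * Real.log (Kc/η) := by
        have hr0 := mul_nonneg hlam0 hXnn
        have he : (1-lam) * (mutualInfo p Q + Real.log (1/(1-η)) + δ * Real.log (Kc/η))
            = (mutualInfo p Q + Real.log (1/(1-η)) + δ * Real.log (Kc/η))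
              - lam * (mutualInfo p Q + Real.log (1/(1-η)) + δ * Real.log (Kc/η)) := by ring
        linarith
      have b3 : lam * Real.log Kc ≤ ρmax * δ / d * Real.log Kc :=
        mul_le_mul_of_nonneg_right hlamle hlogK
      linarith
    rw [hCdef]
    linarith [hRDle, hchain1, hstep]
  have hne : (Set.Nonempty {r | ∃ Q, IsCondProb Q ∧ avgDist p Q ρ ≤ d ∧ r = mutualInfo p Q}) :=
    ⟨mutualInfo p Q0, Q0, hQ0c, by rw [avgDist_zero_kernel p k0 hk0]; exact hd.le, rfl⟩
  have hfin : RD t d ρ - C ≤ RD p d ρ := by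
    unfold RD
    refine le_csInf hne ?_
    rintro r ⟨Q, h1, h2, rfl⟩
    have := main Q h1 h2
    unfold RD at this
    linarith
  linarith

private lemma pi_sum_prod {n : ℕ} [Fintype A] (F : Fin n → A → ℝ) :
    ∑ x : Fin n → A, ∏ i, F i (x i) = ∏ i, ∑ a, F i a := (Fintype.prod_sum F).symm

private lemma prodProb_nonneg {n : ℕ} {p : A → ℝ} (hp0 : ∀ a, 0 ≤ p a) (x : Fin n → A) :
    0 ≤ prodProb p x := Finset.prod_nonneg fun i _ => hp0 _

private lemma sum_prodProb {n : ℕ} [Fintype A] {p : A → ℝ} (hp : IsProb p) :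
    ∑ x : Fin n → A, prodProb p x = 1 := by
  unfold prodProb
  calc ∑ x : Fin n → A, ∏ i, p (x i) = ∏ i : Fin n, ∑ a, p a :=
        pi_sum_prod (fun _ a => p a)
    _ = 1 := by simp [hp.2]

private lemma typeOf_isProb {n : ℕ} [Fintype A] [DecidableEq A] (hn : 0 < n) (x : Fin n → A) :
    IsProb (typeOf x) := by
  constructor
  · intro a; unfold typeOf; positivity
  · unfold typeOf
    rw [← Finset.sum_div]
    have hcount : ∑ a, ((Finset.univ.filter fun i => x i = a).card : ℝ) = (n:ℝ) := by
      have h := Finset.card_eq_sum_card_fiberwise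
        (f := x) (s := Finset.univ) (t := Finset.univ) (fun i _ => Finset.mem_univ (x i))
      rw [Finset.card_univ, Fintype.card_fin] at h
      exact_mod_cast h.symm
    rw [hcount, div_self (by exact_mod_cast hn.ne' : (n:ℝ) ≠ 0)]

private lemma exp_single {n : ℕ} [Fintype A] [DecidableEq A] {p : A → ℝ} (hp : IsProb p)
    (i : Fin n) (f : A → ℝ) :
    ∑ x : Fin n → A, prodProb p x * f (x i) = ∑ a, p a * f a := by
  have e : ∀ x : Fin n → A, prodProb p x * f (x i) =
      ∏ l, (p (x l) * (if l = i then f (x l) else 1)) := by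
    intro x
    rw [Finset.prod_mul_distrib, Finset.prod_ite_eq' Finset.univ i (fun l => f (x l))]
    simp [prodProb]
  calc ∑ x : Fin n → A, prodProb p x * f (x i)
      = ∑ x : Fin n → A, ∏ l, (p (x l) * (if l = i then f (x l) else 1)) :=
        Finset.sum_congr rfl fun x _ => e x
    _ = ∏ l : Fin n, ∑ a, (p a * (if l = i then f a else 1)) :=
        pi_sum_prod (fun l a => p a * (if l = i then f a else 1))
    _ = ∑ a, p a * f a := by
      rw [Finset.prod_eq_single i]
      · simp
      · intro l _ hl; simp [hl, hp.2]
      · intro h; exact absurd (Finset.mem_univ _) h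

private lemma exp_pair {n : ℕ} [Fintype A] [DecidableEq A] {p : A → ℝ} (hp : IsProb p)
    {i i' : Fin n} (hne : i ≠ i') (f g : A → ℝ) :
    ∑ x : Fin n → A, prodProb p x * (f (x i) * g (x i')) =
      (∑ a, p a * f a) * (∑ a, p a * g a) := by
  have e : ∀ x : Fin n → A, prodProb p x * (f (x i) * g (x i')) =
      ∏ l, (p (x l) * ((if l = i then f (x l) else 1) * (if l = i' then g (x l) else 1))) := by
    intro x
    rw [Finset.prod_mul_distrib, Finset.prod_mul_distrib,
        Finset.prod_ite_eq' Finset.univ i (fun l => f (x l)),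
        Finset.prod_ite_eq' Finset.univ i' (fun l => g (x l))]
    simp [prodProb, mul_assoc]
  calc ∑ x : Fin n → A, prodProb p x * (f (x i) * g (x i'))
      = ∑ x : Fin n → A, ∏ l, (p (x l) *
          ((if l = i then f (x l) else 1) * (if l = i' then g (x l) else 1))) :=
        Finset.sum_congr rfl fun x _ => e x
    _ = ∏ l : Fin n, ∑ a, (p a * ((if l = i then f a else 1) * (if l = i' then g a else 1))) :=
        pi_sum_prod (fun l a => p a * ((if l = i then f a else 1) * (if l = i' then g a else 1)))
    _ = (∑ a, p a * f a) * (∑ a, p a * g a) := by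
      have h1 : ∏ l ∈ (Finset.univ.erase i).erase i',
          (∑ a, p a * ((if l = i then f a else 1) * (if l = i' then g a else 1))) = 1 := by
        refine Finset.prod_eq_one fun l hl => ?_
        have h2 := Finset.mem_erase.mp hl
        have h3 := Finset.mem_erase.mp h2.2
        simp [h2.1, h3.1, hp.2]
      rw [← Finset.mul_prod_erase Finset.univ _ (Finset.mem_univ i),
          ← Finset.mul_prod_erase (Finset.univ.erase i) _
            (Finset.mem_erase.mpr ⟨Ne.symm hne, Finset.mem_univ i'⟩),
          h1, mul_one]
      congr 1
      · simp [hne]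
      · simp [Ne.symm hne]

private lemma second_moment {n : ℕ} [Fintype A] [DecidableEq A] (hn : 0 < n)
    {p : A → ℝ} (hp : IsProb p) (a : A) :
    ∑ x : Fin n → A, prodProb p x * (typeOf x a - p a)^2 ≤ 1 / n := by
  have hnR : (0:ℝ) < n := by exact_mod_cast hn
  set f : A → ℝ := fun b => (if b = a then 1 else 0) - p a with hfdef
  have htype : ∀ x : Fin n → A, typeOf x a - p a = (∑ i, f (x i)) / n := by
    intro x
    unfold typeOf
    have h1 : ((Finset.univ.filter fun i => x i = a).card : ℝ) =
        ∑ i : Fin n, (if x i = a then (1:ℝ) else 0) := by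
      rw [Finset.card_filter]
      push_cast
      rfl
    have h2 : ∑ i : Fin n, f (x i) =
        (∑ i : Fin n, (if x i = a then (1:ℝ) else 0)) - n * p a := by
      rw [hfdef]
      rw [Finset.sum_sub_distrib, Finset.sum_const, Finset.card_univ, Fintype.card_fin,
          nsmul_eq_mul]
    rw [h2, ← h1]
    field_simp
  have hpa1 : p a ≤ 1 := hp.2 ▸ Finset.single_le_sum (fun c _ => hp.1 c) (Finset.mem_univ a)
  have hpa0 := hp.1 a
  have hEf : ∑ b, p b * f b = 0 := by
    have e : ∀ b, p b * f b = p b * (if b = a then (1:ℝ) else 0) - p b * p a := fun b => by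
      rw [hfdef]; ring
    rw [Finset.sum_congr rfl fun b _ => e b, Finset.sum_sub_distrib, ← Finset.sum_mul, hp.2,
        one_mul]
    have : ∑ b, p b * (if b = a then (1:ℝ) else 0) = p a := by
      rw [Finset.sum_eq_single a]
      · simp
      · intro b _ hb; simp [hb]
      · intro h; exact absurd (Finset.mem_univ _) h
    rw [this, sub_self]
  have hEff : ∑ b, p b * (f b * f b) ≤ 1 := by
    have hf2 : ∀ b, f b * f b ≤ 1 := by
      intro b
      rw [hfdef]
      dsimp only
      split <;> nlinarith
    calc ∑ b, p b * (f b * f b) ≤ ∑ b, p b * 1 :=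
          Finset.sum_le_sum fun b _ => mul_le_mul_of_nonneg_left (hf2 b) (hp.1 b)
      _ = 1 := by simp [hp.2]
  have hmain : ∑ x : Fin n → A, prodProb p x * (∑ i, f (x i))^2 ≤ n := by
    have hexp : ∀ x : Fin n → A, prodProb p x * (∑ i, f (x i))^2 =
        ∑ i, ∑ i', prodProb p x * (f (x i) * f (x i')) := by
      intro x
      rw [sq, Finset.sum_mul_sum, Finset.mul_sum]
      refine Finset.sum_congr rfl fun i _ => ?_
      rw [Finset.mul_sum]
    calc ∑ x : Fin n → A, prodProb p x * (∑ i, f (x i))^2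
        = ∑ i : Fin n, ∑ i' : Fin n, ∑ x : Fin n → A, prodProb p x * (f (x i) * f (x i')) := by
          rw [Finset.sum_congr rfl fun x _ => hexp x, Finset.sum_comm]
          exact Finset.sum_congr rfl fun i _ => Finset.sum_comm
      _ ≤ ∑ i : Fin n, ∑ i' : Fin n, (if i = i' then (1:ℝ) else 0) := by
          refine Finset.sum_le_sum fun i _ => Finset.sum_le_sum fun i' _ => ?_
          by_cases h : i = i'
          · subst h
            rw [if_pos rfl]
            calc ∑ x : Fin n → A, prodProb p x * (f (x i) * f (x i))
                = ∑ b, p b * (f b * f b) := exp_single hp i (fun b => f b * f b)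
              _ ≤ 1 := hEff
          · rw [if_neg h]
            calc ∑ x : Fin n → A, prodProb p x * (f (x i) * f (x i'))
                = (∑ b, p b * f b) * (∑ b, p b * f b) := exp_pair hp h f f
              _ = 0 := by rw [hEf, mul_zero]
              _ ≤ 0 := le_refl 0
      _ = n := by
          have : ∀ i : Fin n, ∑ i' : Fin n, (if i = i' then (1:ℝ) else 0) = 1 := by
            intro i
            rw [Finset.sum_ite_eq]
            simp
          rw [Finset.sum_congr rfl fun i _ => this i]
          simp
  calc ∑ x : Fin n → A, prodProb p x * (typeOf x a - p a)^2
      = (∑ x : Fin n → A, prodProb p x * (∑ i, f (x i))^2) / (n:ℝ)^2 := by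
        have e : ∀ x : Fin n → A, prodProb p x * (typeOf x a - p a)^2 =
            prodProb p x * (∑ i, f (x i))^2 / (n:ℝ)^2 := by
          intro x
          rw [htype x, div_pow]
          ring
        rw [Finset.sum_congr rfl fun x _ => e x, ← Finset.sum_div]
    _ ≤ (n:ℝ) / (n:ℝ)^2 :=
        div_le_div_of_nonneg_right hmain (by positivity)
    _ = 1 / n := by
        rw [sq]
        field_simp

private lemma exp_abs_dev {n : ℕ} [Fintype A] [DecidableEq A] (hn : 0 < n) {p : A → ℝ}
    (hp : IsProb p) (a : A) {γ : ℝ} (hγ : 0 < γ) :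
    ∑ x : Fin n → A, prodProb p x * |typeOf x a - p a| ≤ (γ + 1/(n*γ))/2 := by
  have hnR : (0:ℝ) < n := by exact_mod_cast hn
  have hpt : ∀ x : Fin n → A, prodProb p x * |typeOf x a - p a| ≤
      prodProb p x * ((γ + (typeOf x a - p a)^2/γ)/2) := by
    intro x
    refine mul_le_mul_of_nonneg_left ?_ (prodProb_nonneg hp.1 x)
    set y := typeOf x a - p a
    have h3 : |y| * (2*γ) ≤ γ*γ + y^2 := by
      nlinarith [sq_nonneg (|y| - γ), sq_abs y]
    have he : (γ + y^2/γ)/2 - |y| = (γ*γ + y^2 - |y| * (2*γ))/(2*γ) := by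
      field_simp
    have : 0 ≤ (γ + y^2/γ)/2 - |y| := by
      rw [he]
      apply div_nonneg (by linarith) (by linarith)
    linarith
  calc ∑ x : Fin n → A, prodProb p x * |typeOf x a - p a|
      ≤ ∑ x : Fin n → A, prodProb p x * ((γ + (typeOf x a - p a)^2/γ)/2) :=
        Finset.sum_le_sum fun x _ => hpt x
    _ = (γ * (∑ x : Fin n → A, prodProb p x)
        + (∑ x : Fin n → A, prodProb p x * (typeOf x a - p a)^2)/γ)/2 := by
        rw [Finset.mul_sum, Finset.sum_div, ← Finset.sum_add_distrib, Finset.sum_div]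
        refine Finset.sum_congr rfl fun x _ => ?_
        field_simp
    _ ≤ (γ * 1 + (1/n)/γ)/2 := by
        have h1 := second_moment hn hp a
        rw [sum_prodProb hp]
        have h2 : (∑ x : Fin n → A, prodProb p x * (typeOf x a - p a)^2)/γ ≤ (1/n)/γ :=
          div_le_div_of_nonneg_right h1 hγ.le
        linarith
    _ = (γ + 1/(n*γ))/2 := by
        rw [mul_one, div_div]

/-- Lemma 7: for fixed `d > 0`,
`lim_{n→∞} sup_{p ∈ P(A), ρ ∈ D} |E_p[R(T,d,ρ)] − R(p,d,ρ)| = 0`. -/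
theorem expTypeRD_uniform_convergence (J K : ℕ) (hJ : 0 < J) (hK : 0 < K)
    (ρmax : ℝ) (hρmax : 0 < ρmax) (d : ℝ) (hd : 0 < d) :
    ∀ ε > 0, ∃ N : ℕ, ∀ n : ℕ, N ≤ n →
      ∀ (p : Fin J → ℝ) (ρ : Fin J → Fin K → ℝ),
        IsProb p → IsDistMeasure ρmax ρ →
        |expTypeRD n p d ρ - RD p d ρ| ≤ ε := by

  intro ε hε
  have hNJ : Nonempty (Fin J) := ⟨⟨0, hJ⟩⟩
  set η : ℝ := 1 - Real.exp (-(ε/2)) with hηdef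
  have hexp1 : Real.exp (-(ε/2)) < 1 := Real.exp_lt_one_iff.mpr (by linarith)
  have hη0 : 0 < η := by rw [hηdef]; linarith
  have hη1 : η < 1 := by
    have := Real.exp_pos (-(ε/2))
    rw [hηdef]; linarith
  have h1η : 1 - η = Real.exp (-(ε/2)) := by rw [hηdef]; ring
  have hc0 : Real.log (1/(1-η)) = ε/2 := by
    rw [h1η, one_div, Real.log_inv, Real.log_exp]; ring
  have hK1 : (1:ℝ) ≤ (K:ℝ) := by exact_mod_cast hK
  have hJ1 : (1:ℝ) ≤ (J:ℝ) := by exact_mod_cast hJ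
  have hJ0 : (0:ℝ) < (J:ℝ) := by linarith
  have hlogK : 0 ≤ Real.log (K:ℝ) := Real.log_nonneg hK1
  set c1 : ℝ := Real.log ((K:ℝ)/η) + ρmax/d * Real.log K with hc1def
  have hc1pos : 0 < c1 := by
    have h1 : 0 < Real.log ((K:ℝ)/η) := by
      apply Real.log_pos
      rw [lt_div_iff₀ hη0]
      nlinarith
    have h2 : 0 ≤ ρmax/d * Real.log K := mul_nonneg (by positivity) hlogK
    rw [hc1def]; linarith
  set γ : ℝ := ε/(4*c1*J) with hγdef
  have hγ0 : 0 < γ := by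
    rw [hγdef]
    exact div_pos hε (by positivity)
  refine ⟨max 1 ⌈8*c1^2*(J:ℝ)^2/ε^2⌉₊, ?_⟩
  intro n hn p ρ hp hρ
  have hn1 : 1 ≤ n := le_trans (le_max_left _ _) hn
  have hn0 : 0 < n := hn1
  have hnR : (0:ℝ) < n := by exact_mod_cast hn0
  have hnbig : 8*c1^2*(J:ℝ)^2/ε^2 ≤ n := by
    have h1 := Nat.le_ceil (8*c1^2*(J:ℝ)^2/ε^2)
    have h2 : (⌈8*c1^2*(J:ℝ)^2/ε^2⌉₊ : ℝ) ≤ n := by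
      exact_mod_cast le_trans (le_max_right _ _) hn
    linarith
  have hxbd : ∀ x : Fin n → Fin J, |RD (typeOf x) d ρ - RD p d ρ| ≤
      ε/2 + c1 * (∑ a, |typeOf x a - p a|) := by
    intro x
    have htx : IsProb (typeOf x) := typeOf_isProb hn0 x
    have h1 := RD_continuity hρmax hd hη0 hη1 p (typeOf x) ρ hp htx hρ
    have h2 := RD_continuity hρmax hd hη0 hη1 (typeOf x) p ρ htx hp hρ
    simp only [Fintype.card_fin] at h1 h2
    have hsym : ∑ a, |p a - typeOf x a| = ∑ a, |typeOf x a - p a| :=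
      Finset.sum_congr rfl fun a _ => abs_sub_comm _ _
    rw [hsym] at h2
    have hCe : Real.log (1/(1-η)) + (∑ a, |typeOf x a - p a|) * Real.log ((K:ℝ)/η)
        + ρmax * (∑ a, |typeOf x a - p a|)/d * Real.log K
        = ε/2 + c1 * (∑ a, |typeOf x a - p a|) := by
      rw [hc0, hc1def]; ring
    rw [abs_sub_le_iff]
    constructor
    · linarith [h1, hCe]
    · linarith [h2, hCe]
  have hsplit : expTypeRD n p d ρ - RD p d ρ =
      ∑ x : Fin n → Fin J, prodProb p x * (RD (typeOf x) d ρ - RD p d ρ) := by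
    unfold expTypeRD
    have e : ∀ x : Fin n → Fin J, prodProb p x * (RD (typeOf x) d ρ - RD p d ρ) =
        prodProb p x * RD (typeOf x) d ρ - prodProb p x * RD p d ρ := fun x => by ring
    rw [Finset.sum_congr rfl fun x _ => e x, Finset.sum_sub_distrib, ← Finset.sum_mul,
        sum_prodProb hp, one_mul]
  have hEdelta : ∑ a : Fin J, ∑ x : Fin n → Fin J, prodProb p x * |typeOf x a - p a| ≤
      (J:ℝ) * ((γ + 1/(n*γ))/2) := by
    calc ∑ a : Fin J, ∑ x : Fin n → Fin J, prodProb p x * |typeOf x a - p a|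
        ≤ ∑ _a : Fin J, (γ + 1/(n*γ))/2 :=
          Finset.sum_le_sum fun a _ => exp_abs_dev hn0 hp a hγ0
      _ = (J:ℝ) * ((γ + 1/(n*γ))/2) := by
          rw [Finset.sum_const, Finset.card_univ, Fintype.card_fin, nsmul_eq_mul]
  have hmainbd : |expTypeRD n p d ρ - RD p d ρ| ≤
      ε/2 + c1 * ((J:ℝ) * ((γ + 1/(n*γ))/2)) := by
    calc |expTypeRD n p d ρ - RD p d ρ|
        ≤ ∑ x : Fin n → Fin J, |prodProb p x * (RD (typeOf x) d ρ - RD p d ρ)| := by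
          rw [hsplit]; exact Finset.abs_sum_le_sum_abs _ _
      _ ≤ ∑ x : Fin n → Fin J, prodProb p x * (ε/2 + c1 * (∑ a, |typeOf x a - p a|)) := by
          refine Finset.sum_le_sum fun x _ => ?_
          rw [abs_mul, abs_of_nonneg (prodProb_nonneg hp.1 x)]
          exact mul_le_mul_of_nonneg_left (hxbd x) (prodProb_nonneg hp.1 x)
      _ = ε/2 + c1 * ∑ a : Fin J, ∑ x : Fin n → Fin J, prodProb p x * |typeOf x a - p a| := by
          have e1 : ∀ x : Fin n → Fin J,
              prodProb p x * (ε/2 + c1 * (∑ a, |typeOf x a - p a|)) =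
              prodProb p x * (ε/2) + c1 * ∑ a, prodProb p x * |typeOf x a - p a| := fun x => by
            rw [show (∑ a, prodProb p x * |typeOf x a - p a|)
                = prodProb p x * ∑ a, |typeOf x a - p a| from (Finset.mul_sum _ _ _).symm]
            ring
          rw [Finset.sum_congr rfl fun x _ => e1 x, Finset.sum_add_distrib, ← Finset.sum_mul,
              sum_prodProb hp, one_mul]
          congr 1
          rw [← Finset.mul_sum, Finset.sum_comm]
      _ ≤ ε/2 + c1 * ((J:ℝ) * ((γ + 1/(n*γ))/2)) := by
          have := mul_le_mul_of_nonneg_left hEdelta hc1pos.le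
          linarith
  have e3 : c1 * ((J:ℝ) * ((γ + 1/(n*γ))/2)) = c1*(J:ℝ)*γ/2 + c1*(J:ℝ)/(2*n*γ) := by
    field_simp
  have e4 : c1*(J:ℝ)*γ/2 = ε/8 := by
    rw [hγdef]
    field_simp
    ring
  have hq : c1*(J:ℝ)/(2*(n:ℝ)*γ) = 2*c1^2*(J:ℝ)^2/((n:ℝ)*ε) := by
    rw [hγdef]
    field_simp
    ring
  have h8 : 8*c1^2*(J:ℝ)^2 ≤ (n:ℝ)*ε^2 := by
    have := (div_le_iff₀ (by positivity : (0:ℝ) < ε^2)).mp hnbig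
    linarith
  have e5 : 2*c1^2*(J:ℝ)^2/((n:ℝ)*ε) ≤ ε/4 := by
    rw [div_le_div_iff₀ (mul_pos hnR hε) (by norm_num : (0:ℝ) < 4)]
    nlinarith
  rw [hq] at e3
  linarith [hmainbd, e3, e4, e5]
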